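/- arXiv:math-ph/0703044 — 3 statements merged into one kernel-verified Lean document; each statement's English description precedes it below -/
import Mathlib

section
/- On the Poisson manifold (ℝ³)^N with brackets {y_i^α, y_j^β} = -δ_{ij} ε_{αβγ} y_i^γ, the rational Gaudin Hamiltonians H_i = ⟨p, y_i⟩ + Σ_{j≠i} ⟨y_i, y_j⟩/(λ_i - λ_j) (1 ≤ i ≤ N), where p ∈ ℝ³ is a constant vector and λ₁,…,λ_N are pairwise distinct real numbers, are pairwise in involution: {H_i, H_j} = 0 for all i, j. -/
open Matrix

variable (N : ℕ)

/-- Gradient with respect to the `i`-th `ℝ³` variable. -/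
noncomputable def gradI (F : (Fin N → Fin 3 → ℝ) → ℝ) (y : Fin N → Fin 3 → ℝ)
    (i : Fin N) : Fin 3 → ℝ :=
  fun α => fderiv ℝ F y (Pi.single i (Pi.single α 1))

/-- The product `su(2)*` Lie–Poisson bracket on `(ℝ³)^N`. -/
noncomputable def poissonBracket (F G : (Fin N → Fin 3 → ℝ) → ℝ)
    (y : Fin N → Fin 3 → ℝ) : ℝ :=
  -∑ i : Fin N, y i ⬝ᵥ (gradI N F y i ⨯₃ gradI N G y i)

/-- The rational Gaudin Hamiltonian `H_i`. -/
noncomputable def gaudinH (p : Fin 3 → ℝ) (lam : Fin N → ℝ) (i : Fin N)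
    (y : Fin N → Fin 3 → ℝ) : ℝ :=
  p ⬝ᵥ y i + ∑ j ∈ Finset.univ.filter (· ≠ i), (y i ⬝ᵥ y j) / (lam i - lam j)

/-!
Each `H_i` is affine in every single variable `y_k`, so its partial gradients can be read off:
`∇_k H_i = y_i / (λ_i - λ_k)` for `k ≠ i` and `∇_i H_i = p + ∑_{m ≠ i} y_m / (λ_i - λ_m)`.
Substituting them, `{H_i, H_j}` for `i ≠ j` collapses to `∑_m c_m ⟨y_m, y_i × y_j⟩`: the `p`-terms
cancel, the terms `m ∈ {i, j}` are degenerate triple products, and for every other `m` the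
coefficient `c_m` vanishes by the partial-fraction identity
`1 / ((a - c)(b - c)) = (1 / (a - b)) (1 / (b - c) - 1 / (a - c))`.
-/

theorem inv_sub_mul_inv_sub_eq {𝕜 : Type*} [Field 𝕜] {a b c : 𝕜} (hab : a ≠ b) (hac : a ≠ c)
    (hbc : b ≠ c) : (a - c)⁻¹ * (b - c)⁻¹ = (a - b)⁻¹ * ((b - c)⁻¹ - (a - c)⁻¹) := by
  field_simp [sub_ne_zero.mpr hab, sub_ne_zero.mpr hac, sub_ne_zero.mpr hbc]
  ring

section Gradient

variable {N}

theorem poissonBracket_self (F : (Fin N → Fin 3 → ℝ) → ℝ) (y : Fin N → Fin 3 → ℝ) :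
    poissonBracket N F F y = 0 := by
  simp [poissonBracket, cross_self]

theorem gradI_eq_of_add_single {F : (Fin N → Fin 3 → ℝ) → ℝ} {y : Fin N → Fin 3 → ℝ}
    (hF : DifferentiableAt ℝ F y) {k : Fin N} {w : Fin 3 → ℝ}
    (h : ∀ e, F (y + Pi.single k e) = F y + w ⬝ᵥ e) :
    gradI N F y k = w := by
  funext α
  set v : Fin N → Fin 3 → ℝ := Pi.single k (Pi.single α 1)
  have hline : HasDerivAt (fun t : ℝ => F (y + t • v)) (w ⬝ᵥ Pi.single α 1) 0 := by
    have hF_line : (fun t : ℝ => F (y + t • v)) = fun t => F y + t * (w ⬝ᵥ Pi.single α 1) := by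
      funext t
      rw [← Pi.single_smul, h, dotProduct_smul, smul_eq_mul]
    rw [hF_line]
    exact (hasDerivAt_mul_const _).const_add _
  simpa [gradI, v] using (hF.hasFDerivAt.hasLineDerivAt v).unique hline

end Gradient

section Gaudin

open Finset

variable {N} (p : Fin 3 → ℝ) (lam : Fin N → ℝ) (y : Fin N → Fin 3 → ℝ)

theorem differentiable_gaudinH (i : Fin N) : Differentiable ℝ (gaudinH N p lam i) := by
  unfold gaudinH dotProduct
  fun_prop

theorem gaudinH_add_single_self (i : Fin N) (e : Fin 3 → ℝ) :
    gaudinH N p lam i (y + Pi.single i e) = gaudinH N p lam i y +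
      (p + ∑ j ∈ univ.filter (· ≠ i), (lam i - lam j)⁻¹ • y j) ⬝ᵥ e := by
  have hsum : ∀ j ∈ univ.filter (· ≠ i),
      ((y i + e) ⬝ᵥ (y j + (Pi.single i e : Fin N → Fin 3 → ℝ) j)) / (lam i - lam j) =
        (y i ⬝ᵥ y j) / (lam i - lam j) + ((lam i - lam j)⁻¹ • y j) ⬝ᵥ e := by
    intro j hj
    rw [mem_filter] at hj
    simp only [Pi.single_eq_of_ne hj.2, add_zero, add_dotProduct, smul_dotProduct,
      dotProduct_comm e, smul_eq_mul]
    ring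
  simp only [gaudinH, Pi.add_apply, Pi.single_eq_same]
  rw [sum_congr rfl hsum, sum_add_distrib, add_dotProduct, sum_dotProduct,
    dotProduct_add]
  ring

theorem gaudinH_add_single_of_ne {i k : Fin N} (hk : k ≠ i) (e : Fin 3 → ℝ) :
    gaudinH N p lam i (y + Pi.single k e) = gaudinH N p lam i y +
      ((lam i - lam k)⁻¹ • y i) ⬝ᵥ e := by
  have hk_mem : k ∈ univ.filter (· ≠ i) := by simpa using hk
  have hsum : ∑ j ∈ univ.filter (· ≠ i),
      (y i ⬝ᵥ (Pi.single k e : Fin N → Fin 3 → ℝ) j) / (lam i - lam j) =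
        ((lam i - lam k)⁻¹ • y i) ⬝ᵥ e := by
    rw [sum_eq_single_of_mem k hk_mem fun j _ hjk => by simp [Pi.single_eq_of_ne hjk]]
    simp [div_eq_inv_mul]
  simp only [gaudinH, Pi.add_apply, Pi.single_eq_of_ne hk.symm, add_zero, dotProduct_add,
    add_div, sum_add_distrib, hsum]
  ring

theorem gradI_gaudinH_self (i : Fin N) :
    gradI N (gaudinH N p lam i) y i =
      p + ∑ j ∈ univ.filter (· ≠ i), (lam i - lam j)⁻¹ • y j :=
  gradI_eq_of_add_single (differentiable_gaudinH p lam i y) (gaudinH_add_single_self p lam y i)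

theorem gradI_gaudinH_of_ne {i k : Fin N} (hk : k ≠ i) :
    gradI N (gaudinH N p lam i) y k = (lam i - lam k)⁻¹ • y i :=
  gradI_eq_of_add_single (differentiable_gaudinH p lam i y) (gaudinH_add_single_of_ne p lam y hk)

theorem add_sum_smul_dotProduct_of_dotProduct_eq_zero {i : Fin N} {w : Fin 3 → ℝ}
    (hw : y i ⬝ᵥ w = 0) (a : Fin 3 → ℝ) :
    (a + ∑ m ∈ univ.filter (· ≠ i), (lam i - lam m)⁻¹ • y m) ⬝ᵥ w =
      a ⬝ᵥ w + ∑ m, (lam i - lam m)⁻¹ * (y m ⬝ᵥ w) := by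
  rw [add_dotProduct, sum_dotProduct, sum_filter_of_ne fun m _ hm => ?_]
  · simp only [smul_dotProduct, smul_eq_mul]
  · rintro rfl
    exact hm (by rw [smul_dotProduct, hw, smul_zero])

theorem poissonBracket_gaudinH_of_ne {i j : Fin N} (hij : i ≠ j) :
    poissonBracket N (gaudinH N p lam i) (gaudinH N p lam j) y =
      -∑ m, ((lam i - lam j)⁻¹ * ((lam i - lam m)⁻¹ - (lam j - lam m)⁻¹) +
        (lam i - lam m)⁻¹ * (lam j - lam m)⁻¹) * (y m ⬝ᵥ (y i ⨯₃ y j)) := by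
  have hj : j ∈ univ.erase i := mem_erase.mpr ⟨hij.symm, mem_univ j⟩
  rw [poissonBracket, ← add_sum_erase _ _ (mem_univ i), ← add_sum_erase _ _ hj]
  have term_i : y i ⬝ᵥ (gradI N (gaudinH N p lam i) y i ⨯₃ gradI N (gaudinH N p lam j) y i) =
      (lam i - lam j)⁻¹ *
        (p ⬝ᵥ (y i ⨯₃ y j) + ∑ m, (lam i - lam m)⁻¹ * (y m ⬝ᵥ (y i ⨯₃ y j))) := by
    rw [gradI_gaudinH_self, gradI_gaudinH_of_ne _ _ _ hij, map_smul, dotProduct_smul,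
      triple_product_permutation, ← cross_anticomm, dotProduct_neg,
      add_sum_smul_dotProduct_of_dotProduct_eq_zero lam y (dot_self_cross _ _), smul_eq_mul,
      mul_neg, ← neg_mul, ← inv_neg, neg_sub]
  have term_j : y j ⬝ᵥ (gradI N (gaudinH N p lam i) y j ⨯₃ gradI N (gaudinH N p lam j) y j) =
      -(lam i - lam j)⁻¹ *
        (p ⬝ᵥ (y i ⨯₃ y j) + ∑ m, (lam j - lam m)⁻¹ * (y m ⬝ᵥ (y i ⨯₃ y j))) := by
    rw [gradI_gaudinH_self, gradI_gaudinH_of_ne _ _ _ hij.symm, LinearMap.map_smul₂,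
      dotProduct_smul, triple_product_permutation, triple_product_permutation, ← cross_anticomm,
      dotProduct_neg, add_sum_smul_dotProduct_of_dotProduct_eq_zero lam y (dot_cross_self _ _),
      smul_eq_mul, mul_neg, ← neg_mul]
  have term_rest : ∀ k ∈ (univ.erase i).erase j,
      y k ⬝ᵥ (gradI N (gaudinH N p lam i) y k ⨯₃ gradI N (gaudinH N p lam j) y k) =
        (lam i - lam k)⁻¹ * (lam j - lam k)⁻¹ * (y k ⬝ᵥ (y i ⨯₃ y j)) := by
    intro k hk
    simp only [mem_erase, mem_univ, and_true] at hk
    obtain ⟨hkj, hki⟩ := hk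
    rw [gradI_gaudinH_of_ne _ _ _ hki, gradI_gaudinH_of_ne _ _ _ hkj, map_smul,
      LinearMap.map_smul₂, dotProduct_smul, dotProduct_smul, smul_eq_mul, smul_eq_mul,
      mul_left_comm, mul_assoc]
  rw [term_i, term_j, sum_congr rfl term_rest, sum_erase _ (by rw [dot_cross_self, mul_zero]),
    sum_erase _ (by rw [dot_self_cross, mul_zero])]
  simp only [mul_add, add_mul, mul_sub, sub_mul, neg_mul, mul_sum, sum_add_distrib,
    sum_sub_distrib, sum_neg_distrib, mul_assoc]
  ring

end Gaudin

/-- The rational Gaudin Hamiltonians are pairwise in involution. -/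
theorem gaudin_involution (p : Fin 3 → ℝ) (lam : Fin N → ℝ)
    (hlam : Function.Injective lam) (i j : Fin N) (y : Fin N → Fin 3 → ℝ) :
    poissonBracket N (gaudinH N p lam i) (gaudinH N p lam j) y = 0 := by
  rcases eq_or_ne i j with rfl | hij
  · exact poissonBracket_self _ y
  rw [poissonBracket_gaudinH_of_ne p lam y hij, neg_eq_zero]
  refine Finset.sum_eq_zero fun m _ => ?_
  by_cases hm : m = i ∨ m = j
  · rcases hm with rfl | rfl
    · rw [dot_self_cross, mul_zero]
    · rw [dot_cross_self, mul_zero]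
  · obtain ⟨hmi, hmj⟩ := not_or.mp hm
    rw [inv_sub_mul_inv_sub_eq (hlam.ne hij) (hlam.ne (Ne.symm hmi)) (hlam.ne (Ne.symm hmj))]
    ring
end

section
/- Let y₁,…,y_N : ℝ → ℝ³ be differentiable and suppose they satisfy the Gaudin flow ẏ_i = (λ_i p + Σ_j y_j) × y_i for constant p ∈ ℝ³ and pairwise distinct reals λ_i. Then for every λ ∉ {λ₁,…,λ_N}, the Lax matrix L(λ) = P + Σ_i Y_i/(λ - λ_i) (matrices via the ℝ³ ≅ su(2) identification) satisfies the Lax equation d/dt L(λ) = [L(λ), M(λ)] with M(λ) = Σ_i λ_i Y_i/(λ - λ_i). -/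
/-!
Under `su2` the cross product becomes the commutator, so the flow reads
`Ẏ_i = ⁅λ_i P + S, Y_i⁆` with `S = Σ_j Y_j`, and `dL/dt = Σ_i c_i ⁅λ_i P + S, Y_i⁆` with
`c_i = 1/(λ - λ_i)`. Writing `U = Σ_i c_i Y_i = L - P`, the relation `λ_i c_i = λ c_i - 1`
gives `M = λ U - S`, hence `⁅L, M⁆ = Σ_i λ_i c_i ⁅P, Y_i⁆ + ⁅S, U⁆`, which is the same sum.
This last identity holds in any Lie algebra.
-/

open Matrix

/-- The standard identification of `ℝ³` with `su(2)`. -/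
noncomputable def su2 (a : Fin 3 → ℝ) : Matrix (Fin 2) (Fin 2) ℂ :=
  (1 / 2 : ℂ) • !![-Complex.I * a 2, -Complex.I * a 0 - a 1;
                   -Complex.I * a 0 + a 1, Complex.I * a 2]

/-- The rational Gaudin Lax matrix `L(λ) = P + Σ_i Y_i/(λ - λ_i)`. -/
noncomputable def gaudinLax {N : ℕ} (p : Fin 3 → ℝ) (lam : Fin N → ℝ)
    (y : Fin N → Fin 3 → ℝ) (l : ℝ) : Matrix (Fin 2) (Fin 2) ℂ :=
  su2 p + ∑ i : Fin N, ((l : ℂ) - (lam i : ℂ))⁻¹ • su2 (y i)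

/-- The auxiliary matrix `M(λ) = Σ_i λ_i Y_i/(λ - λ_i)`. -/
noncomputable def gaudinM {N : ℕ} (lam : Fin N → ℝ)
    (y : Fin N → Fin 3 → ℝ) (l : ℝ) : Matrix (Fin 2) (Fin 2) ℂ :=
  ∑ i : Fin N, (((lam i : ℂ)) * ((l : ℂ) - (lam i : ℂ))⁻¹) • su2 (y i)

attribute [local instance] LieRing.ofAssociativeRing

theorem sum_smul_lie_eq_lie_of_mul_eq {K L ι : Type*} [CommRing K] [LieRing L]
    [LieAlgebra K L] [Fintype ι] (P : L) (Y : ι → L) (lam c : ι → K) (l : K)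
    (hc : ∀ i, lam i * c i = l * c i - 1) :
    ∑ i, c i • ⁅lam i • P + ∑ j, Y j, Y i⁆ =
      ⁅P + ∑ i, c i • Y i, ∑ i, (lam i * c i) • Y i⁆ := by
  set U := ∑ i, c i • Y i
  set S := ∑ j, Y j
  have hM : ∑ i, (lam i * c i) • Y i = l • U - S := by
    simp only [hc, sub_smul, one_smul, mul_smul, Finset.sum_sub_distrib, U, S, Finset.smul_sum]
  calc ∑ i, c i • ⁅lam i • P + S, Y i⁆
      = ∑ i, (lam i * c i) • ⁅P, Y i⁆ + ⁅S, U⁆ := by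
        simp only [add_lie, smul_lie, smul_add, smul_smul, Finset.sum_add_distrib, U, lie_sum,
          lie_smul, mul_comm (c _)]
    _ = ⁅P, ∑ i, (lam i * c i) • Y i⁆ + ⁅U, l • U - S⁆ := by
        rw [lie_sub, lie_smul, lie_self, smul_zero, zero_sub, lie_skew, lie_sum _ _ P]
        simp only [lie_smul]
    _ = ⁅P + U, ∑ i, (lam i * c i) • Y i⁆ := by rw [add_lie, hM]

noncomputable def su2Linear : (Fin 3 → ℝ) →ₗ[ℝ] Matrix (Fin 2) (Fin 2) ℂ where
  toFun := su2
  map_add' a b := by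
    ext k m
    fin_cases k <;> fin_cases m <;> simp [su2] <;> ring
  map_smul' r a := by
    ext k m
    fin_cases k <;> fin_cases m <;> simp [su2] <;> ring

theorem su2Linear_apply (a : Fin 3 → ℝ) : su2Linear a = su2 a := rfl

theorem su2_cross (a b : Fin 3 → ℝ) : su2 (a ⨯₃ b) = ⁅su2 a, su2 b⁆ := by
  ext k m
  fin_cases k <;> fin_cases m <;>
    simp [su2, crossProduct, Ring.lie_def] <;> ring_nf <;>
    simp [Complex.ext_iff] <;> ring

theorem HasDerivAt.su2_apply {f : ℝ → Fin 3 → ℝ} {f' : Fin 3 → ℝ} {t : ℝ}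
    (h : HasDerivAt f f' t) (k m : Fin 2) :
    HasDerivAt (fun t => su2 (f t) k m) (su2 f' k m) t :=
  (LinearMap.toContinuousLinearMap
    (entryLinearMap ℝ ℂ k m ∘ₗ su2Linear)).hasFDerivAt.comp_hasDerivAt t h

theorem HasDerivAt.gaudinLax_apply {N : ℕ} (p : Fin 3 → ℝ) (lam : Fin N → ℝ)
    {y : Fin N → ℝ → Fin 3 → ℝ} {y' : Fin N → Fin 3 → ℝ} (l : ℝ) {t : ℝ}
    (h : ∀ i, HasDerivAt (y i) (y' i) t) (k m : Fin 2) :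
    HasDerivAt (fun t => gaudinLax p lam (fun i => y i t) l k m)
      ((∑ i, ((l : ℂ) - (lam i : ℂ))⁻¹ • su2 (y' i)) k m) t := by
  simp only [gaudinLax, Matrix.add_apply, Matrix.sum_apply, Matrix.smul_apply, smul_eq_mul]
  exact (HasDerivAt.fun_sum fun i _ =>
    ((h i).su2_apply k m).const_mul (((l : ℂ) - (lam i : ℂ))⁻¹)).const_add (su2 p k m)

theorem gaudin_lax_equation_general {N : ℕ} (p : Fin 3 → ℝ) (lam : Fin N → ℝ)
    (y : Fin N → ℝ → Fin 3 → ℝ)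
    (hflow : ∀ i t, HasDerivAt (y i)
      ((lam i • p + ∑ j : Fin N, y j t) ⨯₃ y i t) t)
    (l : ℝ) (hl : ∀ i, l ≠ lam i) (t : ℝ) (k m : Fin 2) :
    HasDerivAt (fun t => gaudinLax p lam (fun i => y i t) l k m)
      ((gaudinLax p lam (fun i => y i t) l * gaudinM lam (fun i => y i t) l -
        gaudinM lam (fun i => y i t) l * gaudinLax p lam (fun i => y i t) l) k m)
      t := by
  have hc : ∀ i, (lam i : ℂ) * ((l : ℂ) - lam i)⁻¹ = l * ((l : ℂ) - lam i)⁻¹ - 1 := by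
    intro i
    have hne : (l : ℂ) - lam i ≠ 0 := sub_ne_zero.mpr (by exact_mod_cast hl i)
    linear_combination -mul_inv_cancel₀ hne
  have hbracket : ∑ i, ((l : ℂ) - lam i)⁻¹ • su2 ((lam i • p + ∑ j, y j t) ⨯₃ y i t) =
      ⁅gaudinLax p lam (fun i => y i t) l, gaudinM lam (fun i => y i t) l⁆ := by
    have hsu2 : ∀ i, su2 ((lam i • p + ∑ j, y j t) ⨯₃ y i t) =
        ⁅(lam i : ℂ) • su2 p + ∑ j, su2 (y j t), su2 (y i t)⁆ := by
      intro i
      rw [su2_cross, ← su2Linear_apply, map_add, map_smul, map_sum, Complex.coe_smul]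
      rfl
    simp only [hsu2]
    exact sum_smul_lie_eq_lie_of_mul_eq (su2 p) (fun i => su2 (y i t)) (fun i => (lam i : ℂ))
      (fun i => ((l : ℂ) - lam i)⁻¹) (l : ℂ) hc
  rw [← Ring.lie_def, ← hbracket]
  exact HasDerivAt.gaudinLax_apply p lam l (fun i => hflow i t) k m

/-- Solutions of the Gaudin flow `ẏ_i = (λ_i p + Σ_j y_j) × y_i` give rise to
the Lax equation `dL(λ)/dt = [L(λ), M(λ)]` (stated entrywise). -/
theorem gaudin_lax_equation {N : ℕ} (p : Fin 3 → ℝ) (lam : Fin N → ℝ)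
    (hlam : Function.Injective lam) (y : Fin N → ℝ → Fin 3 → ℝ)
    (hflow : ∀ i t, HasDerivAt (y i)
      ((lam i • p + ∑ j : Fin N, y j t) ⨯₃ y i t) t)
    (l : ℝ) (hl : ∀ i, l ≠ lam i) (t : ℝ) (k m : Fin 2) :
    HasDerivAt (fun t => gaudinLax p lam (fun i => y i t) l k m)
      ((gaudinLax p lam (fun i => y i t) l * gaudinM lam (fun i => y i t) l -
        gaudinM lam (fun i => y i t) l * gaudinLax p lam (fun i => y i t) l) k m)
      t :=
  gaudin_lax_equation_general p lam y hflow l hl t k m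
end

section
/- Let m, a : ℝ → ℝ³ satisfy the Clebsch equations ṁ = a × (B₁ a), ȧ = m × a, with B₁ = diag(0, k², k² - 1). Then K₁ = ⟨m,a⟩, K₂ = (1/2)⟨a,a⟩, I₁ = (1/2)⟨m,m⟩ - (1/2)⟨a, B₁a⟩ and I₂ = (1/2)⟨m, Am⟩ - (1/2)⟨a, B₂a⟩ (with A = diag(1-k²,1,0), B₂ = diag(0,0,k²-1)) are all conserved along the flow. -/
/-!
Differentiating along the flow leaves triple products. The derivatives of `⟨m,a⟩` and
`½⟨a,a⟩` are `⟨a × Ba, a⟩ + ⟨m, m × a⟩` and `⟨a, m × a⟩`, which vanish. For symmetric `A`, `C`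
the derivative of `½⟨m,Am⟩ - ½⟨a,Ca⟩` is `⟨Am, a × Ba⟩ - ⟨Ca, m × a⟩`; for `A = 1`, `C = B` it
vanishes by cyclicity of the triple product, and for `A = diag(1-k²,1,0)`, `C = B₂` both terms
equal `(k²-1) a₂ (m₀a₁ - m₁a₀)`.
-/

open Matrix

section Calculus

variable {𝕜 ι : Type*} [NontriviallyNormedField 𝕜] [Fintype ι] {u v : 𝕜 → ι → 𝕜}
  {u' v' : ι → 𝕜} {t : 𝕜}

theorem HasDerivAt.dotProduct (hu : HasDerivAt u u' t) (hv : HasDerivAt v v' t) :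
    HasDerivAt (fun s => u s ⬝ᵥ v s) (u' ⬝ᵥ v t + u t ⬝ᵥ v') t := by
  have hui := hasDerivAt_pi.1 hu
  have hvi := hasDerivAt_pi.1 hv
  have := HasDerivAt.fun_sum (u := Finset.univ) fun i _ => (hui i).fun_mul (hvi i)
  rwa [Finset.sum_add_distrib] at this

theorem HasDerivAt.mulVec (M : Matrix ι ι 𝕜) (hu : HasDerivAt u u' t) :
    HasDerivAt (fun s => M *ᵥ u s) (M *ᵥ u') t :=
  hasDerivAt_pi.2 fun i => by
    simpa [Matrix.mulVec] using (hasDerivAt_const t (M i)).dotProduct hu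

theorem HasDerivAt.dotProduct_mulVec_self {M : Matrix ι ι 𝕜} (hM : M.IsSymm)
    (hu : HasDerivAt u u' t) :
    HasDerivAt (fun s => u s ⬝ᵥ (M *ᵥ u s)) (2 * (u t ⬝ᵥ (M *ᵥ u'))) t := by
  refine (hu.dotProduct (hu.mulVec M)).congr_deriv ?_
  rw [dotProduct_comm, dotProduct_mulVec, ← mulVec_transpose, hM.eq, two_mul]

end Calculus

section Clebsch

variable {B : Matrix (Fin 3) (Fin 3) ℝ} {m a : ℝ → Fin 3 → ℝ} {t : ℝ}

theorem hasDerivAt_clebsch_dotProduct (hm : HasDerivAt m (a t ⨯₃ (B *ᵥ a t)) t)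
    (ha : HasDerivAt a (m t ⨯₃ a t) t) :
    HasDerivAt (fun s => m s ⬝ᵥ a s) 0 t := by
  simpa only [dotProduct_comm _ (a t), dot_self_cross, add_zero] using hm.dotProduct ha

theorem hasDerivAt_clebsch_half_dotProduct_self (ha : HasDerivAt a (m t ⨯₃ a t) t) :
    HasDerivAt (fun s => (1 / 2 : ℝ) * (a s ⬝ᵥ a s)) 0 t := by
  simpa only [dotProduct_comm _ (a t), dot_cross_self, add_zero, mul_zero]
    using (ha.dotProduct ha).const_mul (1 / 2 : ℝ)

theorem hasDerivAt_clebsch_quadratic {A C : Matrix (Fin 3) (Fin 3) ℝ} (hA : A.IsSymm)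
    (hC : C.IsSymm) (hAC : ∀ x y, (A *ᵥ x) ⬝ᵥ (y ⨯₃ (B *ᵥ y)) = (C *ᵥ y) ⬝ᵥ (x ⨯₃ y))
    (hm : HasDerivAt m (a t ⨯₃ (B *ᵥ a t)) t) (ha : HasDerivAt a (m t ⨯₃ a t) t) :
    HasDerivAt (fun s => (1 / 2 : ℝ) * (m s ⬝ᵥ (A *ᵥ m s)) -
      (1 / 2 : ℝ) * (a s ⬝ᵥ (C *ᵥ a s))) 0 t := by
  refine (((hm.dotProduct_mulVec_self hA).const_mul _).sub
    ((ha.dotProduct_mulVec_self hC).const_mul _)).congr_deriv ?_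
  have hA' : m t ⬝ᵥ (A *ᵥ (a t ⨯₃ (B *ᵥ a t))) = (A *ᵥ m t) ⬝ᵥ (a t ⨯₃ (B *ᵥ a t)) := by
    rw [dotProduct_mulVec, ← mulVec_transpose, hA.eq]
  have hC' : a t ⬝ᵥ (C *ᵥ (m t ⨯₃ a t)) = (C *ᵥ a t) ⬝ᵥ (m t ⨯₃ a t) := by
    rw [dotProduct_mulVec, ← mulVec_transpose, hC.eq]
  rw [hA', hC', hAC]
  ring

theorem hasDerivAt_clebsch_energy (hB : B.IsSymm) (hm : HasDerivAt m (a t ⨯₃ (B *ᵥ a t)) t)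
    (ha : HasDerivAt a (m t ⨯₃ a t) t) :
    HasDerivAt (fun s => (1 / 2 : ℝ) * (m s ⬝ᵥ m s) -
      (1 / 2 : ℝ) * (a s ⬝ᵥ (B *ᵥ a s))) 0 t := by
  have hAC (x y : Fin 3 → ℝ) : (1 *ᵥ x) ⬝ᵥ (y ⨯₃ (B *ᵥ y)) = (B *ᵥ y) ⬝ᵥ (x ⨯₃ y) := by
    rw [one_mulVec, triple_product_permutation, triple_product_permutation]
  simpa only [one_mulVec] using hasDerivAt_clebsch_quadratic isSymm_one hB hAC hm ha

end Clebsch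

theorem diagonal_mulVec_dotProduct_cross_clebsch (k : ℝ) (x y : Fin 3 → ℝ) :
    (diagonal ![1 - k ^ 2, 1, 0] *ᵥ x) ⬝ᵥ (y ⨯₃ (diagonal ![0, k ^ 2, k ^ 2 - 1] *ᵥ y)) =
      (diagonal ![0, 0, k ^ 2 - 1] *ᵥ y) ⬝ᵥ (x ⨯₃ y) := by
  simp only [dotProduct, Fin.sum_univ_three, mulVec_diagonal, cross_apply, cons_val]
  ring

/-- Along the Clebsch flow `ṁ = a × (B₁a)`, `ȧ = m × a` with
`B₁ = diag(0,k²,k²-1)`, the quantities `K₁ = ⟨m,a⟩`, `K₂ = (1/2)⟨a,a⟩`,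
`I₁ = (1/2)⟨m,m⟩ - (1/2)⟨a,B₁a⟩`, `I₂ = (1/2)⟨m,Am⟩ - (1/2)⟨a,B₂a⟩`
(with `A = diag(1-k²,1,0)`, `B₂ = diag(0,0,k²-1)`) are conserved. -/
theorem clebsch_conserved (k : ℝ) (m a : ℝ → Fin 3 → ℝ)
    (hm : ∀ t, HasDerivAt m
      (a t ⨯₃ (Matrix.diagonal ![0, k ^ 2, k ^ 2 - 1] *ᵥ a t)) t)
    (ha : ∀ t, HasDerivAt a (m t ⨯₃ a t) t) (t : ℝ) :
    HasDerivAt (fun t => m t ⬝ᵥ a t) 0 t ∧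
    HasDerivAt (fun t => (1 / 2 : ℝ) * (a t ⬝ᵥ a t)) 0 t ∧
    HasDerivAt (fun t => (1 / 2 : ℝ) * (m t ⬝ᵥ m t) -
      (1 / 2 : ℝ) * (a t ⬝ᵥ (Matrix.diagonal ![0, k ^ 2, k ^ 2 - 1] *ᵥ a t)))
      0 t ∧
    HasDerivAt (fun t => (1 / 2 : ℝ) *
        (m t ⬝ᵥ (Matrix.diagonal ![1 - k ^ 2, 1, 0] *ᵥ m t)) -
      (1 / 2 : ℝ) * (a t ⬝ᵥ (Matrix.diagonal ![0, 0, k ^ 2 - 1] *ᵥ a t)))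
      0 t :=
  ⟨hasDerivAt_clebsch_dotProduct (hm t) (ha t),
    hasDerivAt_clebsch_half_dotProduct_self (ha t),
    hasDerivAt_clebsch_energy (isSymm_diagonal _) (hm t) (ha t),
    hasDerivAt_clebsch_quadratic (isSymm_diagonal _) (isSymm_diagonal _)
      (diagonal_mulVec_dotProduct_cross_clebsch k) (hm t) (ha t)⟩
end
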